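/- Let G be a graph of diameter 2 that has a cut-vertex. Then md(G) equals the number of blocks of G. -/

import Mathlib

open SimpleGraph

variable {V : Type*}

/-- Color `i` separates `u` and `v`: there is an edge-cut, all of whose edges
have color `i`, whose removal disconnects `u` from `v`. -/
def separatesColor (G : SimpleGraph V) (Γ : Sym2 V → ℕ) (i : ℕ) (u v : V) : Prop :=
  ∃ F : Set (Sym2 V), F ⊆ G.edgeSet ∧ (∀ e ∈ F, Γ e = i) ∧
    ¬ ((G.deleteEdges F).Reachable u v)

/-- An MD-coloring: every pair of distinct vertices is separated by a
monochromatic edge-cut. -/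
def IsMDColoring (G : SimpleGraph V) (Γ : Sym2 V → ℕ) : Prop :=
  ∀ u v : V, u ≠ v → ∃ i, separatesColor G Γ i u v

/-- The monochromatic disconnection number: the maximum number of colors
used by an MD-coloring. -/
noncomputable def mdNumber (G : SimpleGraph V) : ℕ :=
  sSup {k | ∃ Γ : Sym2 V → ℕ, IsMDColoring G Γ ∧ (Γ '' G.edgeSet).ncard = k}

/-- The induced subgraph on `B` has no cut-vertex. -/
def NoCutVertexOn (G : SimpleGraph V) (B : Set V) : Prop :=
  ∀ v ∈ B, (G.induce (B \ {v})).Connected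

/-- `B` is the vertex set of a block of `G`: a maximal connected subgraph
without a cut-vertex (on at least two vertices). -/
def IsBlockSet (G : SimpleGraph V) (B : Set V) : Prop :=
  2 ≤ B.ncard ∧ (G.induce B).Connected ∧ NoCutVertexOn G B ∧
    ∀ B' : Set V, B ⊆ B' → 2 ≤ B'.ncard → (G.induce B').Connected →
      NoCutVertexOn G B' → B = B'

/-!
Removing the cut-vertex `v` leaves at least two components, so a vertex `u ≠ v` has a vertex at
distance two in another component, and every path of length two between them passes through `v`:
diameter two forces `v` to be adjacent to all other vertices. The blocks of `G` are then exactly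
the sets `v + C` for the components `C` of `G - v`.

In an MD-coloring every triangle is monochromatic: a monochromatic cut separating two vertices
of a triangle contains the edge between them and one of the two other edges. With `v` universal,
every edge lies in a triangle through `v`, so each block is monochromatic and there are at most as
many colors as blocks. Conversely, giving each block its own color is an MD-coloring, since
deleting the color of the block of `x ≠ v` isolates `x`.
-/

theorem Set.ncard_image_le_ncard_image {α β γ : Type*} {f : α → β} {g : α → γ} {s : Set α}
    (hs : s.Finite) (hfg : ∀ a ∈ s, ∀ b ∈ s, g a = g b → f a = f b) :
    (f '' s).ncard ≤ (g '' s).ncard := by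
  rcases s.eq_empty_or_nonempty with rfl | ⟨a, -⟩
  · simp
  have : Nonempty α := ⟨a⟩
  have hf : f '' s = (f ∘ Function.invFunOn g s) '' (g '' s) := by
    rw [Set.image_image]
    refine Set.image_congr fun a ha => ?_
    exact (hfg _ (Function.invFunOn_mem ⟨a, ha, rfl⟩) _ ha
      (Function.invFunOn_eq ⟨a, ha, rfl⟩)).symm
  rw [hf]
  exact Set.ncard_image_le (hs.image g)

theorem NoCutVertexOn.connected_induce_diff_singleton {G : SimpleGraph V} {B : Set V}
    (hB : NoCutVertexOn G B) (hconn : (G.induce B).Connected) (v : V) :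
    (G.induce (B \ {v})).Connected := by
  by_cases hvB : v ∈ B
  · exact hB v hvB
  · rwa [Set.sdiff_singleton_eq_self hvB]

namespace SimpleGraph

variable {G : SimpleGraph V} {v x y : V}

theorem mem_of_adj_of_not_reachable_deleteEdges {F : Set (Sym2 V)} (hxy : G.Adj x y)
    (h : ¬ (G.deleteEdges F).Reachable x y) : s(x, y) ∈ F := by
  by_contra hF
  exact h (deleteEdges_adj.2 ⟨hxy, hF⟩).reachable

theorem connected_induce_insert_of_forall_adj {T : Set V} (hT : ∀ u ∈ T, G.Adj v u) :
    (G.induce (insert v T)).Connected := by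
  rw [connected_iff_exists_forall_reachable]
  refine ⟨⟨v, Set.mem_insert _ _⟩, fun ⟨u, hu⟩ => ?_⟩
  rcases hu with rfl | hu
  · rfl
  · exact Adj.reachable (hT u hu)

/-! `G.deleteIncidenceSet v` plays the role of `G - v`: it keeps `v` as an isolated vertex. -/

theorem deleteIncidenceSet_reachable_iff : (G.deleteIncidenceSet v).Reachable v x ↔ v = x := by
  refine ⟨fun ⟨p⟩ => ?_, fun h => h ▸ .rfl⟩
  cases p with
  | nil => rfl
  | cons h _ => exact absurd rfl (deleteIncidenceSet_adj.1 h).2.1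

theorem notMem_supp_connectedComponentMk_deleteIncidenceSet (hx : x ≠ v) :
    v ∉ ((G.deleteIncidenceSet v).connectedComponentMk x).supp := fun h =>
  hx (deleteIncidenceSet_reachable_iff.1 (ConnectedComponent.exact h)).symm

theorem connected_induce_supp_connectedComponentMk_deleteIncidenceSet (hx : x ≠ v) :
    (G.induce ((G.deleteIncidenceSet v).connectedComponentMk x).supp).Connected := by
  rw [← G.induce_deleteIncidenceSet_of_notMem
    (notMem_supp_connectedComponentMk_deleteIncidenceSet hx)]
  exact ConnectedComponent.connected_toSimpleGraph _

/-- When `v` is adjacent to all other vertices and `x ≠ v`, this is the block containing `x`. -/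
def componentBlock (G : SimpleGraph V) (v x : V) : Set V :=
  insert v ((G.deleteIncidenceSet v).connectedComponentMk x).supp

theorem componentBlock_self : G.componentBlock v v = {v} :=
  Set.eq_singleton_iff_unique_mem.2 ⟨Set.mem_insert _ _, fun _ hx =>
    hx.elim id fun h => (deleteIncidenceSet_reachable_iff.1 (ConnectedComponent.exact h).symm).symm⟩

theorem componentBlock_diff_singleton (hx : x ≠ v) :
    G.componentBlock v x \ {v} = ((G.deleteIncidenceSet v).connectedComponentMk x).supp :=
  Set.insert_sdiff_self_of_notMem (notMem_supp_connectedComponentMk_deleteIncidenceSet hx)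

theorem componentBlock_eq_of_reachable (h : (G.deleteIncidenceSet v).Reachable x y) :
    G.componentBlock v x = G.componentBlock v y := by
  rw [componentBlock, componentBlock, ConnectedComponent.sound h]

theorem reachable_of_componentBlock_eq (hx : x ≠ v) (hy : y ≠ v)
    (h : G.componentBlock v x = G.componentBlock v y) :
    (G.deleteIncidenceSet v).Reachable x y := by
  have h' := congrArg (· \ {v}) h
  simp only [componentBlock_diff_singleton hx, componentBlock_diff_singleton hy] at h'
  exact ConnectedComponent.exact (ConnectedComponent.supp_inj.1 h')

theorem exists_subset_componentBlock {B : Set V} (hB : (G.induce (B \ {v})).Connected) :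
    ∃ x ≠ v, B ⊆ G.componentBlock v x := by
  obtain ⟨⟨x, hxB, hxv⟩⟩ := hB.nonempty
  rw [← G.induce_deleteIncidenceSet_of_notMem (s := B \ {v}) (x := v) (by simp)] at hB
  refine ⟨x, hxv, fun y hy => ?_⟩
  rcases eq_or_ne y v with rfl | hyv
  · exact Set.mem_insert _ _
  · exact Set.mem_insert_of_mem _ <| ConnectedComponent.sound <|
      (hB.preconnected ⟨y, hy, hyv⟩ ⟨x, hxB, hxv⟩).map (Embedding.induce _).toHom

theorem connected_induce_componentBlock (hv : ∀ u ≠ v, G.Adj v u) (hx : x ≠ v) :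
    (G.induce (G.componentBlock v x)).Connected :=
  connected_induce_insert_of_forall_adj fun u hu =>
    hv u (ne_of_mem_of_not_mem hu (notMem_supp_connectedComponentMk_deleteIncidenceSet hx))

theorem noCutVertexOn_componentBlock (hv : ∀ u ≠ v, G.Adj v u) (hx : x ≠ v) :
    NoCutVertexOn G (G.componentBlock v x) := by
  intro w hw
  rcases eq_or_ne w v with rfl | hwv
  · rw [componentBlock_diff_singleton hx]
    exact connected_induce_supp_connectedComponentMk_deleteIncidenceSet hx
  · rw [componentBlock, ← Set.insert_sdiff_singleton_comm hwv.symm]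
    exact connected_induce_insert_of_forall_adj fun u hu =>
      hv u (ne_of_mem_of_not_mem hu.1 (notMem_supp_connectedComponentMk_deleteIncidenceSet hx))

theorem isBlockSet_componentBlock [Finite V] (hv : ∀ u ≠ v, G.Adj v u) (hx : x ≠ v) :
    IsBlockSet G (G.componentBlock v x) := by
  refine ⟨?_, connected_induce_componentBlock hv hx, noCutVertexOn_componentBlock hv hx,
    fun B hsub _ hconn hB => ?_⟩
  · have hvx : {v, x} ⊆ G.componentBlock v x :=
      Set.insert_subset (Set.mem_insert _ _) (Set.singleton_subset_iff.2 (Set.mem_insert_of_mem _ rfl))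
    exact (Set.ncard_pair hx.symm).symm.le.trans (Set.ncard_le_ncard hvx)
  · obtain ⟨y, -, hBy⟩ := exists_subset_componentBlock (hB.connected_induce_diff_singleton hconn v)
    have hxy : x ∈ G.componentBlock v y := hBy (hsub (Set.mem_insert_of_mem _ rfl))
    rw [← componentBlock_eq_of_reachable (ConnectedComponent.exact (hxy.resolve_left hx))] at hBy
    exact hsub.antisymm hBy

theorem setOf_isBlockSet_eq [Finite V] (hv : ∀ u ≠ v, G.Adj v u) :
    {B | IsBlockSet G B} = G.componentBlock v '' {v}ᶜ := by
  ext B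
  refine ⟨fun hB => ?_, ?_⟩
  · obtain ⟨_, hconn, hcut, hmax⟩ := hB
    obtain ⟨x, hx, hBx⟩ := exists_subset_componentBlock (hcut.connected_induce_diff_singleton hconn v)
    obtain ⟨hx2, hxconn, hxcut, -⟩ := isBlockSet_componentBlock hv hx
    exact ⟨x, hx, (hmax _ hBx hx2 hxconn hxcut).symm⟩
  · rintro ⟨x, hx, rfl⟩
    exact isBlockSet_componentBlock hv hx

/-- The block containing the edge `e` when `v` is adjacent to all other vertices; the union
selects the endpoint other than `v`, because `G.componentBlock v v = {v}`. -/
def edgeBlock (G : SimpleGraph V) (v : V) : Sym2 V → Set V :=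
  Sym2.lift ⟨fun a b => G.componentBlock v a ∪ G.componentBlock v b, fun _ _ => Set.union_comm _ _⟩

theorem edgeBlock_mk_of_adj (hx : x ≠ v) (hxy : G.Adj x y) :
    G.edgeBlock v s(x, y) = G.componentBlock v x := by
  change G.componentBlock v x ∪ G.componentBlock v y = _
  rcases eq_or_ne y v with rfl | hy
  · rw [componentBlock_self, Set.union_eq_left, Set.singleton_subset_iff]
    exact Set.mem_insert _ _
  · rw [← componentBlock_eq_of_reachable (deleteIncidenceSet_adj.2 ⟨hxy, hx, hy⟩).reachable,
      Set.union_self]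

theorem exists_mk_eq_of_mem_edgeSet {e : Sym2 V} (he : e ∈ G.edgeSet) (v : V) :
    ∃ x y, x ≠ v ∧ G.Adj x y ∧ e = s(x, y) := by
  induction e using Sym2.ind with
  | h a b =>
    rcases eq_or_ne a v with rfl | ha
    · exact ⟨b, a, (G.ne_of_adj he).symm, Adj.symm he, Sym2.eq_swap⟩
    · exact ⟨a, b, ha, he, rfl⟩

theorem image_edgeBlock_edgeSet (hv : ∀ u ≠ v, G.Adj v u) :
    G.edgeBlock v '' G.edgeSet = G.componentBlock v '' {v}ᶜ := by
  ext B
  constructor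
  · rintro ⟨e, he, rfl⟩
    obtain ⟨x, y, hx, hxy, rfl⟩ := exists_mk_eq_of_mem_edgeSet he v
    exact ⟨x, hx, (edgeBlock_mk_of_adj hx hxy).symm⟩
  · rintro ⟨x, hx, rfl⟩
    exact ⟨s(x, v), (hv x hx).symm, edgeBlock_mk_of_adj hx (hv x hx).symm⟩

theorem adj_of_dist_le_two_of_not_reachable (hG : G.Connected) (hd : G.dist x y ≤ 2)
    (hx : x ≠ v) (hy : y ≠ v) (hxy : ¬ (G.deleteIncidenceSet v).Reachable x y) : G.Adj v x := by
  have hne : x ≠ y := fun h => hxy (h ▸ .rfl)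
  have hnadj : ¬ G.Adj x y := fun h => hxy (deleteIncidenceSet_adj.2 ⟨h, hx, hy⟩).reachable
  have hd2 : G.edist x y = 2 := by
    have := hG.one_lt_dist_of_ne_of_not_adj hne hnadj
    rw [← (hG.preconnected x y).coe_dist_eq_edist]
    exact_mod_cast (by omega : G.dist x y = 2)
  obtain ⟨m, hxm, hym⟩ := (edist_eq_two_iff.1 hd2).2.2
  rcases eq_or_ne m v with rfl | hm
  · exact hxm.symm
  · exact absurd ((deleteIncidenceSet_adj.2 ⟨hxm, hx, hm⟩).reachable.trans
      (deleteIncidenceSet_adj.2 ⟨hym.symm, hm, hy⟩).reachable) hxy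

theorem forall_adj_of_not_connected_induce_compl (hG : G.Connected)
    (hdiam : ∀ x y : V, G.dist x y ≤ 2) (hcut : ¬ (G.induce {v}ᶜ).Connected) :
    ∀ u ≠ v, G.Adj v u := by
  intro u hu
  obtain ⟨z, hz, huz⟩ : ∃ z ≠ v, ¬ (G.deleteIncidenceSet v).Reachable u z := by
    by_contra! h
    have hsupp : ((G.deleteIncidenceSet v).connectedComponentMk u).supp = {v}ᶜ :=
      Set.Subset.antisymm
        (fun w hw => ne_of_mem_of_not_mem hw (notMem_supp_connectedComponentMk_deleteIncidenceSet hu))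
        (fun w hw => ConnectedComponent.sound (h w hw).symm)
    exact hcut (hsupp ▸ connected_induce_supp_connectedComponentMk_deleteIncidenceSet hu)
  exact adj_of_dist_le_two_of_not_reachable hG (hdiam u z) hu hz huz

end SimpleGraph

section MDColoring

variable {G : SimpleGraph V} {Γ : Sym2 V → ℕ} {i : ℕ} {v x y z : V}

theorem separatesColor.symm (h : separatesColor G Γ i x y) : separatesColor G Γ i y x :=
  let ⟨F, hFG, hFΓ, hF⟩ := h
  ⟨F, hFG, hFΓ, fun h' => hF h'.symm⟩

theorem separatesColor.triangle (h : separatesColor G Γ i x y) (hxy : G.Adj x y)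
    (hxz : G.Adj x z) (hyz : G.Adj y z) : Γ s(x, y) = i ∧ (Γ s(x, z) = i ∨ Γ s(y, z) = i) := by
  obtain ⟨F, -, hFi, hF⟩ := h
  refine ⟨hFi _ (mem_of_adj_of_not_reachable_deleteEdges hxy hF), ?_⟩
  by_cases hxz' : (G.deleteEdges F).Reachable x z
  · exact .inr (hFi _ (mem_of_adj_of_not_reachable_deleteEdges hyz
      fun hyz' => hF (hxz'.trans hyz'.symm)))
  · exact .inl (hFi _ (mem_of_adj_of_not_reachable_deleteEdges hxz hxz'))

/-- Each of the three cuts separating two vertices of the triangle yields one coincidence of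
colors involving the edge between them; two coincidences make the triangle monochromatic. -/
theorem IsMDColoring.triangle (hΓ : IsMDColoring G Γ) (hxy : G.Adj x y) (hxz : G.Adj x z)
    (hyz : G.Adj y z) : Γ s(x, y) = Γ s(x, z) ∧ Γ s(x, z) = Γ s(y, z) := by
  obtain ⟨i, hi⟩ := hΓ x y hxy.ne
  obtain ⟨j, hj⟩ := hΓ x z hxz.ne
  obtain ⟨k, hk⟩ := hΓ y z hyz.ne
  have h₁ := hi.triangle hxy hxz hyz
  have h₂ := hj.triangle hxz hxy hyz.symm
  have h₃ := hk.triangle hyz hxy.symm hxz.symm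
  rw [Sym2.eq_swap (a := z) (b := y)] at h₂
  rw [Sym2.eq_swap (a := y) (b := x), Sym2.eq_swap (a := z) (b := x)] at h₃
  omega

theorem IsMDColoring.apply_mk_eq_of_reachable (hΓ : IsMDColoring G Γ) (hv : ∀ u ≠ v, G.Adj v u)
    (h : (G.deleteIncidenceSet v).Reachable x y) : Γ s(x, v) = Γ s(y, v) := by
  obtain ⟨p⟩ := h
  induction p with
  | nil => rfl
  | cons h _ ih =>
    obtain ⟨hab, ha, hb⟩ := deleteIncidenceSet_adj.1 h
    exact (hΓ.triangle hab (hv _ ha).symm (hv _ hb).symm).2.trans ih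

theorem IsMDColoring.apply_mk_eq_of_adj (hΓ : IsMDColoring G Γ) (hv : ∀ u ≠ v, G.Adj v u)
    (hx : x ≠ v) (hxy : G.Adj x y) : Γ s(x, y) = Γ s(x, v) := by
  rcases eq_or_ne y v with rfl | hy
  · rfl
  · exact (hΓ.triangle hxy (hv x hx).symm (hv y hy).symm).1

theorem IsMDColoring.eq_of_edgeBlock_eq (hΓ : IsMDColoring G Γ) (hv : ∀ u ≠ v, G.Adj v u)
    {e e' : Sym2 V} (he : e ∈ G.edgeSet) (he' : e' ∈ G.edgeSet)
    (h : G.edgeBlock v e = G.edgeBlock v e') : Γ e = Γ e' := by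
  obtain ⟨x, y, hx, hxy, rfl⟩ := exists_mk_eq_of_mem_edgeSet he v
  obtain ⟨x', y', hx', hxy', rfl⟩ := exists_mk_eq_of_mem_edgeSet he' v
  rw [edgeBlock_mk_of_adj hx hxy, edgeBlock_mk_of_adj hx' hxy'] at h
  rw [hΓ.apply_mk_eq_of_adj hv hx hxy, hΓ.apply_mk_eq_of_adj hv hx' hxy']
  exact hΓ.apply_mk_eq_of_reachable hv (reachable_of_componentBlock_eq hx hx' h)

theorem IsMDColoring.ncard_image_edgeSet_le [Finite V] (hΓ : IsMDColoring G Γ)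
    (hv : ∀ u ≠ v, G.Adj v u) :
    (Γ '' G.edgeSet).ncard ≤ (G.edgeBlock v '' G.edgeSet).ncard :=
  Set.ncard_image_le_ncard_image (Set.toFinite _) fun _ he _ he' =>
    hΓ.eq_of_edgeBlock_eq hv he he'

/-- Deleting the edges of color `f (G.componentBlock v x)` isolates `x ≠ v`. -/
theorem isMDColoring_comp_edgeBlock (f : Set V → ℕ) : IsMDColoring G (f ∘ G.edgeBlock v) := by
  have key : ∀ x y, x ≠ v → x ≠ y →
      separatesColor G (f ∘ G.edgeBlock v) (f (G.componentBlock v x)) x y := by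
    intro x y hx hxy
    refine ⟨{e | e ∈ G.edgeSet ∧ f (G.edgeBlock v e) = f (G.componentBlock v x)},
      fun _ he => he.1, fun _ he => he.2, fun ⟨p⟩ => ?_⟩
    cases p with
    | nil => exact hxy rfl
    | cons h _ =>
      obtain ⟨hadj, hnot⟩ := deleteEdges_adj.1 h
      exact hnot ⟨hadj, by rw [edgeBlock_mk_of_adj hx hadj]⟩
  intro x y hxy
  rcases eq_or_ne x v with rfl | hx
  · exact ⟨_, (key y x hxy.symm hxy.symm).symm⟩
  · exact ⟨_, key x y hx hxy⟩

theorem mdNumber_eq_ncard_image_edgeBlock [Finite V] (hv : ∀ u ≠ v, G.Adj v u) :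
    mdNumber G = (G.edgeBlock v '' G.edgeSet).ncard := by
  obtain ⟨f, hf⟩ := Countable.exists_injective_nat (Set V)
  refine IsGreatest.csSup_eq ⟨⟨f ∘ G.edgeBlock v, isMDColoring_comp_edgeBlock f, ?_⟩, ?_⟩
  · rw [Set.image_comp]
    exact Set.ncard_image_of_injective _ hf
  · rintro _ ⟨Γ, hΓ, rfl⟩
    exact hΓ.ncard_image_edgeSet_le hv

end MDColoring

/-- If `G` has diameter 2 and a cut-vertex, then `md(G)` equals the number
of blocks of `G`. -/
theorem stmt_14 [Fintype V] (G : SimpleGraph V) (hG : G.Connected)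
    (hdiam : ∀ u v : V, G.dist u v ≤ 2)
    (hcut : ∃ v : V, ¬ (G.induce {v}ᶜ).Connected) :
    mdNumber G = {B : Set V | IsBlockSet G B}.ncard := by
  obtain ⟨v, hv⟩ := hcut
  have hv_adj := forall_adj_of_not_connected_induce_compl hG hdiam hv
  rw [mdNumber_eq_ncard_image_edgeBlock hv_adj, setOf_isBlockSet_eq hv_adj,
    image_edgeBlock_edgeSet hv_adj]
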